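/- arXiv:1807.08729 — 2 statements merged into one kernel-verified Lean document; each statement's English description precedes it below -/
import Mathlib

section
/- (Remark on CZ preserving triviality away from its support.) Let K₁, …, K_n be pairwise commuting n-qubit Pauli tensors, let u ≠ v be qubits, and let c ⊆ {1,…,n} be such that the stabilizer S_c = ∏_{i∈c} Kᵢ satisfies u ∉ qsupp(S_c) and v ∉ qsupp(S_c). Then S_c is trivial with respect to the generators K₁,…,K_n if and only if CZ_{u,v} S_c CZ_{u,v}† is trivial with respect to the conjugated generators CZ_{u,v} K₁ CZ_{u,v}†, …, CZ_{u,v} K_n CZ_{u,v}†. In particular, a stabilizer with no support on u and v remains trivial (respectively non-trivial) after the controlled-Z gate on u and v. -/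
/-!
Conjugation by `CZ_{u,v}` is a ⋆-automorphism fixing every operator that acts trivially on `u`
and `v`, because `CZ_{u,v}` is diagonal and depends only on the `u`, `v` coordinates. Pauli tensors
are unitary, so if `S_c = S_α S_β` with disjoint supports, then wherever `S_α` acts trivially so
does `S_β = S_α⋆ S_c`, and symmetrically; hence both supports lie inside that of `S_c`. So when
`S_c` avoids `u` and `v`, conjugation fixes `S_α` and `S_β`, carrying each witness of triviality
to one for the conjugated generators; the inverse conjugation gives the converse.
-/

open Matrix

noncomputable section

/-- Operators on the Hilbert space of qubits indexed by `ι`, as matrices. -/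
abbrev QOp (ι : Type*) := Matrix (ι → Fin 2) (ι → Fin 2) ℂ

def Xmat : Matrix (Fin 2) (Fin 2) ℂ := !![0, 1; 1, 0]
def Ymat : Matrix (Fin 2) (Fin 2) ℂ := !![0, -Complex.I; Complex.I, 0]
def Zmat : Matrix (Fin 2) (Fin 2) ℂ := !![1, 0; 0, -1]

/-- `P` is a 2×2 Pauli matrix (including the identity). -/
def IsPauliMat (P : Matrix (Fin 2) (Fin 2) ℂ) : Prop :=
  P = 1 ∨ P = Xmat ∨ P = Ymat ∨ P = Zmat

/-- `c` is an allowed Pauli phase. -/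
def IsPhase (c : ℂ) : Prop :=
  c = 1 ∨ c = -1 ∨ c = Complex.I ∨ c = -Complex.I

/-- The operator `c • P₀ ⊗ ⋯ ⊗ P_{n-1}` with entries `c * ∏ i, P i (a i) (b i)`. -/
def pauliTensor {ι : Type*} [Fintype ι] (c : ℂ)
    (P : ι → Matrix (Fin 2) (Fin 2) ℂ) : QOp ι :=
  Matrix.of fun a b => c * ∏ i, P i (a i) (b i)

/-- `A` is an n-qubit Pauli tensor. -/
def IsPauliTensor {ι : Type*} [Fintype ι] (A : QOp ι) : Prop :=
  ∃ (c : ℂ) (P : ι → Matrix (Fin 2) (Fin 2) ℂ),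
    IsPhase c ∧ (∀ i, IsPauliMat (P i)) ∧ A = pauliTensor c P

/-- `A` acts trivially on qubit `q`, i.e. `A = I_q ⊗ B`: entrywise, the `(x,y)` block
of `A` with respect to qubit `q` equals `δ_{x y}` times a fixed block. -/
def ActsTriviallyOn {ι : Type*} [DecidableEq ι] (A : QOp ι) (q : ι) : Prop :=
  ∀ (a b : ι → Fin 2) (x y : Fin 2),
    A (Function.update a q x) (Function.update b q y) =
      (if x = y then 1 else 0) * A (Function.update a q 0) (Function.update b q 0)

/-- The qubit support of an operator: those qubits on which it does not act trivially. -/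
def qsupp {ι : Type*} [DecidableEq ι] (A : QOp ι) : Set ι :=
  {q | ¬ ActsTriviallyOn A q}

/-- Ordered product `∏_{i ∈ c} f i` taken in increasing index order. -/
def finOProd {m : ℕ} {α : Type*} [Monoid α] (c : Finset (Fin m)) (f : Fin m → α) : α :=
  ((c.sort (· ≤ ·)).map f).prod

/-- The stabilizer `S_c = ∏_{i ∈ c} K i` (in increasing index order). -/
def stabProd {n : ℕ} (K : Fin n → QOp (Fin n)) (c : Finset (Fin n)) : QOp (Fin n) :=
  finOProd c K

/-- The stabilizer `S_c` is trivial with respect to the generators `K`. -/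
def IsTrivial {n : ℕ} (K : Fin n → QOp (Fin n)) (c : Finset (Fin n)) : Prop :=
  ∃ α β : Finset (Fin n), α.Nonempty ∧ β.Nonempty ∧ Disjoint α β ∧ α ∪ β = c ∧
    qsupp (stabProd K α) ∩ qsupp (stabProd K β) = ∅

/-- The single-qubit operator `u` acting on qubit `q` (identity elsewhere). -/
def embed1 {ι : Type*} [Fintype ι] [DecidableEq ι]
    (u : Matrix (Fin 2) (Fin 2) ℂ) (q : ι) : QOp ι :=
  Matrix.of fun a b =>
    u (a q) (b q) * ∏ i ∈ Finset.univ.erase q, (if a i = b i then (1 : ℂ) else 0)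

/-- The controlled-Z gate on qubits `u` and `v`. -/
def CZop {ι : Type*} [Fintype ι] [DecidableEq ι] (u v : ι) : QOp ι :=
  Matrix.diagonal fun a => if a u = 1 ∧ a v = 1 then (-1 : ℂ) else 1

open Function

section ActsTrivially

variable {ι : Type*} [DecidableEq ι]

theorem ActsTriviallyOn.apply_eq_zero {A : QOp ι} {q : ι} (hA : ActsTriviallyOn A q)
    {a b : ι → Fin 2} (h : a q ≠ b q) : A a b = 0 := by
  simpa [h] using hA a b (a q) (b q)

theorem ActsTriviallyOn.conjTranspose {A : QOp ι} {q : ι} (hA : ActsTriviallyOn A q) :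
    ActsTriviallyOn Aᴴ q := by
  intro a b x y
  simp only [conjTranspose_apply, hA b a y x, star_mul', eq_comm (a := y)]
  split_ifs <;> simp

theorem sum_fiber_update_eq [Fintype ι] {β M : Type*} [Fintype β] [DecidableEq β]
    [AddCommMonoid M] (q : ι) (z : β) (g : (ι → β) → M) (x y : β) :
    ∑ k : ι → β, (if k q = x then g (update k q z) else 0) =
      ∑ k : ι → β, if k q = y then g (update k q z) else 0 := by
  simp only [← Finset.sum_filter]
  refine Finset.sum_nbij' (update · q y) (update · q x) ?_ ?_ ?_ ?_ ?_ <;>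
    intro k hk <;> simp_all

theorem ActsTriviallyOn.mul [Fintype ι] {A B : QOp ι} {q : ι}
    (hA : ActsTriviallyOn A q) (hB : ActsTriviallyOn B q) : ActsTriviallyOn (A * B) q := by
  intro a b x y
  have entry : ∀ (x y : Fin 2) (k : ι → Fin 2),
      A (update a q x) k * B k (update b q y) = if x = y then
        (if k q = x then A (update a q 0) (update k q 0) * B (update k q 0) (update b q 0)
          else 0) else 0 := by
    intro x y k
    have hA' := hA a k x (k q)
    have hB' := hB k b (k q) y
    rw [update_eq_self] at hA' hB'
    rw [hA', hB']
    split_ifs <;> grind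
  simp only [mul_apply]
  rw [Finset.sum_congr rfl fun k _ => entry x y k, Finset.sum_congr rfl fun k _ => entry 0 0 k]
  by_cases hxy : x = y
  · subst hxy
    simp only [if_true, one_mul]
    exact sum_fiber_update_eq q 0 (fun k => A (update a q 0) k * B k (update b q 0)) x 0
  · simp [hxy]

theorem qsupp_left_subset_qsupp_mul [Fintype ι] {A B : QOp ι} (hB : B ∈ unitary (QOp ι))
    (h : qsupp A ∩ qsupp B = ∅) : qsupp A ⊆ qsupp (A * B) := by
  intro q hqA hqAB
  have hqB : ActsTriviallyOn B q := not_not.mp fun hqB => h.subset ⟨hqA, hqB⟩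
  apply hqA
  rw [← mul_one A, ← Unitary.mul_star_self_of_mem hB, ← mul_assoc]
  exact hqAB.mul hqB.conjTranspose

theorem qsupp_right_subset_qsupp_mul [Fintype ι] {A B : QOp ι} (hA : A ∈ unitary (QOp ι))
    (h : qsupp A ∩ qsupp B = ∅) : qsupp B ⊆ qsupp (A * B) := by
  intro q hqB hqAB
  have hqA : ActsTriviallyOn A q := not_not.mp fun hqA => h.subset ⟨hqA, hqB⟩
  apply hqB
  rw [← one_mul B, ← Unitary.star_mul_self_of_mem hA, mul_assoc]
  exact hqA.conjTranspose.mul hqAB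

end ActsTrivially

theorem IsPhase.mem_unitary {c : ℂ} (hc : IsPhase c) : c ∈ unitary ℂ := by
  rw [Unitary.mem_iff_star_mul_self]
  rcases hc with rfl | rfl | rfl | rfl <;> simp

theorem IsPauliMat.mem_unitary {P : Matrix (Fin 2) (Fin 2) ℂ} (hP : IsPauliMat P) :
    P ∈ unitary (Matrix (Fin 2) (Fin 2) ℂ) := by
  apply mem_unitaryGroup_iff.mpr
  rcases hP with rfl | rfl | rfl | rfl <;> ext i j <;> fin_cases i <;> fin_cases j <;>
    simp [Xmat, Ymat, Zmat, mul_apply, Fin.sum_univ_two]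

section Pauli

variable {ι : Type*} [Fintype ι]

theorem pauliTensor_conjTranspose (c : ℂ) (P : ι → Matrix (Fin 2) (Fin 2) ℂ) :
    (pauliTensor c P)ᴴ = pauliTensor (star c) (fun i => (P i)ᴴ) := by
  ext a b
  simp [pauliTensor, star_prod]

theorem pauliTensor_one :
    pauliTensor (1 : ℂ) (fun _ : ι => (1 : Matrix (Fin 2) (Fin 2) ℂ)) = 1 := by
  ext a b
  simp [pauliTensor, one_apply, Finset.prod_boole, funext_iff]

variable [DecidableEq ι]

theorem pauliTensor_mul (c d : ℂ) (P Q : ι → Matrix (Fin 2) (Fin 2) ℂ) :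
    pauliTensor c P * pauliTensor d Q = pauliTensor (c * d) (fun i => P i * Q i) := by
  ext a b
  simp only [pauliTensor, mul_apply, of_apply, Finset.prod_univ_sum, Fintype.piFinset_univ,
    Finset.mul_sum, Finset.prod_mul_distrib]
  exact Finset.sum_congr rfl fun k _ => by ring

theorem pauliTensor_mem_unitary {c : ℂ} {P : ι → Matrix (Fin 2) (Fin 2) ℂ}
    (hc : c ∈ unitary ℂ) (hP : ∀ i, P i ∈ unitary (Matrix (Fin 2) (Fin 2) ℂ)) :
    pauliTensor c P ∈ unitary (QOp ι) := by
  apply mem_unitaryGroup_iff.mpr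
  rw [star_eq_conjTranspose, pauliTensor_conjTranspose, pauliTensor_mul,
    Unitary.mul_star_self_of_mem hc]
  simp only [← star_eq_conjTranspose, fun i => Unitary.mul_star_self_of_mem (hP i)]
  exact pauliTensor_one

theorem IsPauliTensor.mem_unitary {A : QOp ι} (hA : IsPauliTensor A) : A ∈ unitary (QOp ι) := by
  obtain ⟨c, P, hc, hP, rfl⟩ := hA
  exact pauliTensor_mem_unitary hc.mem_unitary fun i => (hP i).mem_unitary

end Pauli

section Stabilizer

theorem map_finOProd {m : ℕ} {M N F : Type*} [Monoid M] [Monoid N] [FunLike F M N]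
    [MonoidHomClass F M N] (φ : F) (c : Finset (Fin m)) (f : Fin m → M) :
    finOProd c (fun i => φ (f i)) = φ (finOProd c f) := by
  rw [finOProd, finOProd, map_list_prod, List.map_map]
  rfl

theorem finOProd_union {m : ℕ} {M : Type*} [Monoid M] {f : Fin m → M}
    (hf : ∀ i j, Commute (f i) (f j)) {s t : Finset (Fin m)} (h : Disjoint s t) :
    finOProd (s ∪ t) f = finOProd s f * finOProd t f := by
  rw [finOProd, finOProd, finOProd, ← List.prod_append, ← List.map_append]
  refine (List.Perm.map f ?_).prod_eq' (List.pairwise_map.mpr (List.pairwise_of_forall hf))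
  rw [← Multiset.coe_eq_coe, ← Multiset.coe_add, Finset.sort_eq, Finset.sort_eq, Finset.sort_eq,
    ← Finset.disjUnion_eq_union s t h]
  rfl

variable {n : ℕ} {K : Fin n → QOp (Fin n)}

theorem stabProd_mem_unitary (hK : ∀ i, K i ∈ unitary (QOp (Fin n))) (s : Finset (Fin n)) :
    stabProd K s ∈ unitary (QOp (Fin n)) :=
  Submonoid.list_prod_mem _ fun _ hA => by
    obtain ⟨i, -, rfl⟩ := List.mem_map.mp hA
    exact hK i

theorem map_stabProd {F : Type*} [FunLike F (QOp (Fin n)) (QOp (Fin n))]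
    [MonoidHomClass F (QOp (Fin n)) (QOp (Fin n))] (φ : F) (s : Finset (Fin n)) :
    stabProd (fun i => φ (K i)) s = φ (stabProd K s) :=
  map_finOProd φ s K

theorem stabProd_union (hcomm : ∀ i j, Commute (K i) (K j)) {s t : Finset (Fin n)}
    (h : Disjoint s t) : stabProd K (s ∪ t) = stabProd K s * stabProd K t :=
  finOProd_union hcomm h

theorem IsTrivial.map {F : Type*} [FunLike F (QOp (Fin n)) (QOp (Fin n))]
    [MonoidHomClass F (QOp (Fin n)) (QOp (Fin n))] {c : Finset (Fin n)}
    (hcomm : ∀ i j, Commute (K i) (K j)) (hK : ∀ i, K i ∈ unitary (QOp (Fin n)))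
    (φ : F) {Q : Set (Fin n)} (hφ : ∀ A, Disjoint (qsupp A) Q → φ A = A)
    (hc : Disjoint (qsupp (stabProd K c)) Q) (h : IsTrivial K c) :
    IsTrivial (fun i => φ (K i)) c := by
  obtain ⟨α, β, hα, hβ, hαβ, rfl, hsupp⟩ := h
  rw [stabProd_union hcomm hαβ] at hc
  refine ⟨α, β, hα, hβ, hαβ, rfl, ?_⟩
  rwa [map_stabProd, map_stabProd,
    hφ _ (hc.mono_left (qsupp_left_subset_qsupp_mul (stabProd_mem_unitary hK β) hsupp)),
    hφ _ (hc.mono_left (qsupp_right_subset_qsupp_mul (stabProd_mem_unitary hK α) hsupp))]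

theorem isTrivial_map_iff (φ : QOp (Fin n) ≃⋆ₐ[ℂ] QOp (Fin n)) {Q : Set (Fin n)}
    (hφ : ∀ A, Disjoint (qsupp A) Q → φ A = A) {c : Finset (Fin n)}
    (hcomm : ∀ i j, Commute (K i) (K j)) (hK : ∀ i, K i ∈ unitary (QOp (Fin n)))
    (hc : Disjoint (qsupp (stabProd K c)) Q) :
    IsTrivial (fun i => φ (K i)) c ↔ IsTrivial K c := by
  refine ⟨fun h => ?_, IsTrivial.map hcomm hK φ hφ hc⟩
  have hφ_symm (A : QOp (Fin n)) (hA : Disjoint (qsupp A) Q) : φ.symm A = A := by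
    rw [φ.symm_apply_eq, hφ A hA]
  have hc' : Disjoint (qsupp (stabProd (fun i => φ (K i)) c)) Q := by
    rwa [map_stabProd, hφ _ hc]
  simpa using IsTrivial.map (fun i j => (hcomm i j).map φ) (fun i => Unitary.map_mem φ (hK i))
    φ.symm hφ_symm hc' h

end Stabilizer

section CZ

variable {ι : Type*} [Fintype ι] [DecidableEq ι]

theorem CZop_mem_unitary (u v : ι) : CZop u v ∈ unitary (QOp ι) := by
  apply mem_unitaryGroup_iff.mpr
  rw [CZop, star_eq_conjTranspose, diagonal_conjTranspose, diagonal_mul_diagonal, ← diagonal_one]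
  congr 1
  ext a
  by_cases h : a u = 1 ∧ a v = 1 <;> simp [h]

theorem commute_CZop {u v : ι} {A : QOp ι} (hu : ActsTriviallyOn A u)
    (hv : ActsTriviallyOn A v) : Commute (CZop u v) A := by
  ext a b
  rw [CZop, diagonal_mul, mul_diagonal]
  by_cases hab : a u = b u ∧ a v = b v
  · rw [hab.1, hab.2, mul_comm]
  · rcases not_and_or.mp hab with h | h
    · rw [hu.apply_eq_zero h, mul_zero, zero_mul]
    · rw [hv.apply_eq_zero h, mul_zero, zero_mul]

theorem CZop_mul_mul_conjTranspose {u v : ι} {A : QOp ι} (hA : Disjoint (qsupp A) {u, v}) :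
    CZop u v * A * (CZop u v)ᴴ = A := by
  simp only [Set.disjoint_insert_right, Set.disjoint_singleton_right, qsupp, Set.mem_ofPred_eq,
    not_not] at hA
  exact (commute_unitary_iff_star_right_conjugate (CZop_mem_unitary u v)).mp
    (commute_CZop hA.1 hA.2)

end CZ

theorem trivial_iff_conj_CZ_general {n : ℕ}
    (K : Fin n → QOp (Fin n)) (hPauli : ∀ i, IsPauliTensor (K i))
    (hcomm : ∀ i j, Commute (K i) (K j))
    (u v : Fin n) (c : Finset (Fin n))
    (hu : u ∉ qsupp (stabProd K c)) (hv : v ∉ qsupp (stabProd K c)) :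
    IsTrivial K c ↔
      IsTrivial (fun i => CZop u v * K i * (CZop u v)ᴴ) c :=
  (isTrivial_map_iff (Unitary.conjStarAlgAut ℂ _ ⟨CZop u v, CZop_mem_unitary u v⟩)
    (fun _ => CZop_mul_mul_conjTranspose) hcomm (fun i => (hPauli i).mem_unitary)
    (by simp [Set.disjoint_insert_right, hu, hv])).symm

/-- A stabilizer with no support on the qubits `u` and `v` is trivial
w.r.t. the generators `K` iff its conjugate by the controlled-Z gate `CZ_{u,v}` is
trivial w.r.t. the conjugated generators. -/
theorem trivial_iff_conj_CZ {n : ℕ}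
    (K : Fin n → QOp (Fin n)) (hPauli : ∀ i, IsPauliTensor (K i))
    (hcomm : ∀ i j, Commute (K i) (K j))
    (u v : Fin n) (huv : u ≠ v) (c : Finset (Fin n))
    (hu : u ∉ qsupp (stabProd K c)) (hv : v ∉ qsupp (stabProd K c)) :
    IsTrivial K c ↔
      IsTrivial (fun i => CZop u v * K i * (CZop u v)ᴴ) c :=
  trivial_iff_conj_CZ_general K hPauli hcomm u v c hu hv
end
end

section
/- (Validity of graph pathfinding via stabilizer pathfinding.) Let G be a finite simple graph on vertex set V and let v₀, v₁, …, v_k (k ≥ 1) be an induced path in G (the vᵢ are distinct and vᵢ is adjacent to v_j if and only if |i − j| = 1), with input I = v₀ and output O = v_k. On qubits indexed by V, define for each w ∈ V the graph-state generator K_w = X_w ∏_{j ∈ N(w)} Z_j, the Pauli tensor with factor X at w, factor Z at each neighbour of w, and identity elsewhere. Set X̄ = Z_{v₀} · ∏_{j odd, 1 ≤ j ≤ k} K_{v_j} and Z̄ = ∏_{j even, 0 ≤ j ≤ k} K_{v_j}. Then X̄ and Z̄ satisfy the stabilizer-pathfinding conditions for O: their single-qubit tensor factors anticommute at qubit O and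 commute at every other qubit. Moreover, at every qubit i ≠ O, any non-identity factor of X̄ or Z̄ is X if i is a path vertex v_j (j < k) and Z if i is a neighbour of some path vertex not itself on the path; both operators have identity factors at all qubits neither on the path nor adjacent to it. Hence the induced measurement pattern consists of Pauli X measurements on the path vertices v₀, …, v_{k−1} and Pauli Z measurements on the external neighbourhood of the path. -/
open Matrix

noncomputable section

/-- The graph-state generator `K_w = X_w ∏_{j ∈ N(w)} Z_j`. -/
def graphGen {V : Type*} [Fintype V] [DecidableEq V]
    (G : SimpleGraph V) [DecidableRel G.Adj] (w : V) : QOp V :=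
  pauliTensor 1 fun j => if j = w then Xmat else if G.Adj w j then Zmat else 1

/-- `X̄ = Z_{v₀} · ∏_{j odd, 1 ≤ j ≤ k} K_{v_j}`. -/
def pathXbar {V : Type*} [Fintype V] [DecidableEq V]
    (G : SimpleGraph V) [DecidableRel G.Adj] {k : ℕ} (v : Fin (k + 1) → V) : QOp V :=
  pauliTensor 1 (fun j => if j = v 0 then Zmat else 1) *
    finOProd (Finset.univ.filter fun j : Fin (k + 1) => (j : ℕ) % 2 = 1)
      (fun j => graphGen G (v j))

/-- `Z̄ = ∏_{j even, 0 ≤ j ≤ k} K_{v_j}`. -/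
def pathZbar {V : Type*} [Fintype V] [DecidableEq V]
    (G : SimpleGraph V) [DecidableRel G.Adj] {k : ℕ} (v : Fin (k + 1) → V) : QOp V :=
  finOProd (Finset.univ.filter fun j : Fin (k + 1) => (j : ℕ) % 2 = 0)
    (fun j => graphGen G (v j))

lemma pt_mul {ι : Type*} [Fintype ι] [DecidableEq ι] (c d : ℂ)
    (P Q : ι → Matrix (Fin 2) (Fin 2) ℂ) :
    pauliTensor c P * pauliTensor d Q = pauliTensor (c * d) (fun i => P i * Q i) := by
  ext a b
  simp only [pauliTensor, Matrix.mul_apply, Matrix.of_apply]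
  have h1 : ∀ x : ι → Fin 2,
      (c * ∏ i, P i (a i) (x i)) * (d * ∏ i, Q i (x i) (b i)) =
        c * d * ∏ i, P i (a i) (x i) * Q i (x i) (b i) := by
    intro x; rw [Finset.prod_mul_distrib]; ring
  rw [Finset.sum_congr rfl fun x _ => h1 x, ← Finset.mul_sum]
  congr 1
  rw [Finset.prod_univ_sum, Fintype.piFinset_univ]

lemma pt_id {ι : Type*} [Fintype ι] [DecidableEq ι] :
    pauliTensor (1 : ℂ) (fun _ => (1 : Matrix (Fin 2) (Fin 2) ℂ)) = (1 : QOp ι) := by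
  ext a b
  simp only [pauliTensor, Matrix.of_apply, one_mul]
  by_cases h : a = b
  · subst h; simp [Matrix.one_apply]
  · obtain ⟨i, hi⟩ := Function.ne_iff.mp h
    rw [Matrix.one_apply, if_neg h]
    exact Finset.prod_eq_zero (Finset.mem_univ i) (by simp [Matrix.one_apply, hi])

lemma pt_list_prod {ι J : Type*} [Fintype ι] [DecidableEq ι]
    (F : J → ι → Matrix (Fin 2) (Fin 2) ℂ) :
    ∀ l : List J, (l.map (fun j => pauliTensor 1 (F j))).prod
      = pauliTensor 1 (fun i => (l.map (fun j => F j i)).prod)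
  | [] => by simp only [List.map_nil, List.prod_nil, pt_id]
  | h :: t => by
      simp only [List.map_cons, List.prod_cons, pt_list_prod F t, pt_mul, one_mul]

lemma lp_all_one {α M : Type*} [Monoid M] (f : α → M) :
    ∀ l : List α, (∀ x ∈ l, f x = 1) → (l.map f).prod = 1
  | [], _ => by simp
  | h :: t, hall => by
      rw [List.map_cons, List.prod_cons, hall h (by simp),
        lp_all_one f t (fun x hx => hall x (by simp [hx])), one_mul]

lemma lp_one_exc {α M : Type*} [Monoid M] (f : α → M) :
    ∀ l : List α, l.Nodup → ∀ a, a ∈ l → (∀ x ∈ l, x ≠ a → f x = 1) →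
      (l.map f).prod = f a
  | [], _, a, ha, _ => by simp at ha
  | h :: t, hnd, a, ha, hone => by
      rw [List.map_cons, List.prod_cons]
      rcases List.nodup_cons.mp hnd with ⟨hht, htnd⟩
      by_cases hha : h = a
      · subst hha
        have : ∀ x ∈ t, f x = 1 := by
          intro x hx
          have hxh : x ≠ h := fun he => hht (he ▸ hx)
          exact hone x (by simp [hx]) hxh
        rw [lp_all_one f t this, mul_one]
      · have hat : a ∈ t := by
          rcases List.mem_cons.mp ha with h' | h'
          · exact absurd h'.symm hha
          · exact h'
        rw [hone h (by simp) hha, one_mul]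
        exact lp_one_exc f t htnd a hat (fun x hx hxa => hone x (by simp [hx]) hxa)

lemma lp_two_exc {α M : Type*} [Monoid M] (f : α → M) (u : M) :
    ∀ l : List α, l.Nodup → ∀ a b, a ∈ l → b ∈ l → a ≠ b → f a = u → f b = u →
      (∀ x ∈ l, x ≠ a → x ≠ b → f x = 1) → (l.map f).prod = u * u
  | [], _, a, _, ha, _, _, _, _, _ => by simp at ha
  | h :: t, hnd, a, b, ha, hb, hab, hfa, hfb, hone => by
      rw [List.map_cons, List.prod_cons]
      rcases List.nodup_cons.mp hnd with ⟨hht, htnd⟩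
      by_cases hha : h = a
      · subst hha
        have hbt : b ∈ t := by
          rcases List.mem_cons.mp hb with h' | h'
          · exact absurd h'.symm (fun he => hab he)
          · exact h'
        have h1 : ∀ x ∈ t, x ≠ b → f x = 1 := by
          intro x hx hxb
          exact hone x (by simp [hx]) (fun he => hht (he ▸ hx)) hxb
        rw [hfa, lp_one_exc f t htnd b hbt h1, hfb]
      · by_cases hhb : h = b
        · subst hhb
          have hat : a ∈ t := by
            rcases List.mem_cons.mp ha with h' | h'
            · exact absurd h'.symm hha
            · exact h'
          have h1 : ∀ x ∈ t, x ≠ a → f x = 1 := by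
            intro x hx hxa
            exact hone x (by simp [hx]) hxa (fun he => hht (he ▸ hx))
          rw [hfb, lp_one_exc f t htnd a hat h1, hfa]
        · have hat : a ∈ t := by
            rcases List.mem_cons.mp ha with h' | h'
            · exact absurd h'.symm hha
            · exact h'
          have hbt : b ∈ t := by
            rcases List.mem_cons.mp hb with h' | h'
            · exact absurd h'.symm hhb
            · exact h'
          rw [hone h (by simp) hha hhb, one_mul]
          exact lp_two_exc f u t htnd a b hat hbt hab hfa hfb
            (fun x hx => hone x (by simp [hx]))

lemma lp_one_or {α M : Type*} [Monoid M] (f : α → M) (u : M) (hu : u * u = 1) :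
    ∀ l : List α, (∀ x ∈ l, f x = 1 ∨ f x = u) →
      (l.map f).prod = 1 ∨ (l.map f).prod = u
  | [], _ => Or.inl (by simp)
  | h :: t, hall => by
      rw [List.map_cons, List.prod_cons]
      rcases hall h (by simp) with h1 | h1 <;>
        rcases lp_one_or f u hu t (fun x hx => hall x (by simp [hx])) with h2 | h2 <;>
          simp [h1, h2, hu]

lemma ZZ : Zmat * Zmat = 1 := by
  ext i j; fin_cases i <;> fin_cases j <;>
    simp [Zmat, Matrix.mul_apply, Fin.sum_univ_two, Matrix.one_apply]

lemma XZ : Xmat * Zmat = -(Zmat * Xmat) := by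
  ext i j; fin_cases i <;> fin_cases j <;>
    simp [Zmat, Xmat, Matrix.mul_apply, Fin.sum_univ_two]

/-- (Validity of graph pathfinding via stabilizer pathfinding.)
For an induced path `v₀, …, v_k` in `G` with output `O = v_k`, the operators
`X̄ = Z_{v₀} ∏_{j odd} K_{v_j}` and `Z̄ = ∏_{j even} K_{v_j}` are Pauli tensors whose
factors anticommute at `O` and commute everywhere else; moreover at every `i ≠ O` every
non-identity factor is `X` on path vertices `v_j` (`j < k`), `Z` on external neighbours
of the path, and both factors are the identity away from the path and its neighbourhood. -/
theorem graph_pathfinding_valid {V : Type*} [Fintype V] [DecidableEq V]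
    (G : SimpleGraph V) [DecidableRel G.Adj]
    (k : ℕ) (hk : 1 ≤ k) (v : Fin (k + 1) → V) (hinj : Function.Injective v)
    (hpath : ∀ i j : Fin (k + 1),
      G.Adj (v i) (v j) ↔ ((i : ℕ) = (j : ℕ) + 1 ∨ (j : ℕ) = (i : ℕ) + 1)) :
    ∃ (c d : ℂ) (P Q : V → Matrix (Fin 2) (Fin 2) ℂ),
      IsPhase c ∧ IsPhase d ∧ (∀ i, IsPauliMat (P i)) ∧ (∀ i, IsPauliMat (Q i)) ∧
      pathXbar G v = pauliTensor c P ∧ pathZbar G v = pauliTensor d Q ∧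
      (P (v (Fin.last k)) * Q (v (Fin.last k)) =
        -(Q (v (Fin.last k)) * P (v (Fin.last k)))) ∧
      (∀ i, i ≠ v (Fin.last k) → P i * Q i = Q i * P i) ∧
      (∀ i, i ≠ v (Fin.last k) →
        ((∃ j : Fin (k + 1), (j : ℕ) < k ∧ v j = i) →
          (P i = 1 ∨ P i = Xmat) ∧ (Q i = 1 ∨ Q i = Xmat)) ∧
        (((∃ j, G.Adj (v j) i) ∧ ¬ (∃ j, v j = i)) →
          (P i = 1 ∨ P i = Zmat) ∧ (Q i = 1 ∨ Q i = Zmat)) ∧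
        ((¬ (∃ j, v j = i) ∧ ¬ (∃ j, G.Adj (v j) i)) →
          P i = 1 ∧ Q i = 1)) := by
    classical
  set F : Fin (k+1) → V → Matrix (Fin 2) (Fin 2) ℂ :=
    fun j i => if i = v j then Xmat else if G.Adj (v j) i then Zmat else 1 with hF
  set Z0 : V → Matrix (Fin 2) (Fin 2) ℂ := fun i => if i = v 0 then Zmat else 1 with hZ0
  set lX : List (Fin (k+1)) :=
    (Finset.univ.filter fun j : Fin (k+1) => (j : ℕ) % 2 = 1).sort (· ≤ ·) with hlX
  set lZ : List (Fin (k+1)) :=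
    (Finset.univ.filter fun j : Fin (k+1) => (j : ℕ) % 2 = 0).sort (· ≤ ·) with hlZ
  set P : V → Matrix (Fin 2) (Fin 2) ℂ :=
    fun i => Z0 i * (lX.map (fun j => F j i)).prod with hP
  set Q : V → Matrix (Fin 2) (Fin 2) ℂ :=
    fun i => (lZ.map (fun j => F j i)).prod with hQ
  have hndX : lX.Nodup := Finset.sort_nodup _ _
  have hndZ : lZ.Nodup := Finset.sort_nodup _ _
  have hmemX : ∀ j : Fin (k+1), j ∈ lX ↔ (j : ℕ) % 2 = 1 := by
    intro j; simp only [hlX]; simp [Finset.mem_sort, Finset.mem_filter]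
  have hmemZ : ∀ j : Fin (k+1), j ∈ lZ ↔ (j : ℕ) % 2 = 0 := by
    intro j; simp only [hlZ]; simp [Finset.mem_sort, Finset.mem_filter]
  have hFv : ∀ j m : Fin (k+1), F j (v m) =
      if m = j then Xmat else
        if ((j : ℕ) = (m : ℕ) + 1 ∨ (m : ℕ) = (j : ℕ) + 1) then Zmat else 1 := by
    intro j m
    simp only [hF]
    by_cases h1 : m = j
    · rw [if_pos (congrArg v h1), if_pos h1]
    · rw [if_neg (fun he => h1 (hinj he)), if_neg h1]
      by_cases h2 : (j : ℕ) = (m : ℕ) + 1 ∨ (m : ℕ) = (j : ℕ) + 1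
      · rw [if_pos ((hpath j m).mpr h2), if_pos h2]
      · rw [if_neg (fun ha => h2 ((hpath j m).mp ha)), if_neg h2]
  have hZ0v : ∀ m : Fin (k+1), Z0 (v m) = if (m : ℕ) = 0 then Zmat else 1 := by
    intro m
    simp only [hZ0]
    by_cases h : (m : ℕ) = 0
    · have hm0 : m = 0 := by rw [Fin.ext_iff, Fin.val_zero]; exact h
      rw [if_pos h, hm0, if_pos rfl]
    · rw [if_neg h, if_neg (fun he => h (by rw [hinj he, Fin.val_zero]))]
  -- value of Q on path vertices
  have hQpath : ∀ m : Fin (k+1),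
      Q (v m) = if (m : ℕ) % 2 = 0 then Xmat
        else if (m : ℕ) = k then Zmat else 1 := by
    intro m
    have hmlt := m.isLt
    simp only [hQ]
    by_cases hm : (m : ℕ) % 2 = 0
    · rw [if_pos hm]
      have hside : ∀ x ∈ lZ, x ≠ m → F x (v m) = 1 := by
        intro x hx hxm
        have hx2 : (x : ℕ) % 2 = 0 := (hmemZ x).mp hx
        have h1 : ¬ m = x := fun he => hxm he.symm
        have h2 : ¬ ((x : ℕ) = (m : ℕ) + 1 ∨ (m : ℕ) = (x : ℕ) + 1) := by
          rintro (h | h) <;> omega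
        rw [hFv x m, if_neg h1, if_neg h2]
      have hfa : F m (v m) = Xmat := by rw [hFv m m, if_pos rfl]
      rw [(lp_one_exc (fun j => F j (v m)) lZ hndZ m ((hmemZ m).mpr hm) hside).trans hfa]
    · rw [if_neg hm]
      have hm1 : (m : ℕ) % 2 = 1 := by omega
      by_cases hmk : (m : ℕ) = k
      · rw [if_pos hmk]
        set a : Fin (k+1) := ⟨(m : ℕ) - 1, by omega⟩ with hadef
        have hav : (a : ℕ) = (m : ℕ) - 1 := rfl
        have hamem : a ∈ lZ := (hmemZ a).mpr (by rw [hav]; omega)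
        have hfa : F a (v m) = Zmat := by
          have h1 : ¬ m = a := by rw [Fin.ext_iff, hav]; omega
          rw [hFv a m, if_neg h1, if_pos (Or.inr (by rw [hav]; omega))]
        have hside : ∀ x ∈ lZ, x ≠ a → F x (v m) = 1 := by
          intro x hx hxa
          have hx2 : (x : ℕ) % 2 = 0 := (hmemZ x).mp hx
          have hxlt := x.isLt
          have hxa' : (x : ℕ) ≠ (m : ℕ) - 1 := by
            intro h; exact hxa (by rw [Fin.ext_iff, hav]; omega)
          have h1 : ¬ m = x := by rw [Fin.ext_iff]; omega
          have h2 : ¬ ((x : ℕ) = (m : ℕ) + 1 ∨ (m : ℕ) = (x : ℕ) + 1) := by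
            rintro (h | h) <;> omega
          rw [hFv x m, if_neg h1, if_neg h2]
        rw [(lp_one_exc (fun j => F j (v m)) lZ hndZ a hamem hside).trans hfa]
      · rw [if_neg hmk]
        set a : Fin (k+1) := ⟨(m : ℕ) - 1, by omega⟩ with hadef
        set b : Fin (k+1) := ⟨(m : ℕ) + 1, by omega⟩ with hbdef
        have hav : (a : ℕ) = (m : ℕ) - 1 := rfl
        have hbv : (b : ℕ) = (m : ℕ) + 1 := rfl
        have hamem : a ∈ lZ := (hmemZ a).mpr (by rw [hav]; omega)
        have hbmem : b ∈ lZ := (hmemZ b).mpr (by rw [hbv]; omega)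
        have hab : a ≠ b := by
          intro h; rw [Fin.ext_iff, hav, hbv] at h; omega
        have hfa : F a (v m) = Zmat := by
          have h1 : ¬ m = a := by rw [Fin.ext_iff, hav]; omega
          rw [hFv a m, if_neg h1, if_pos (Or.inr (by rw [hav]; omega))]
        have hfb : F b (v m) = Zmat := by
          have h1 : ¬ m = b := by rw [Fin.ext_iff, hbv]; omega
          rw [hFv b m, if_neg h1, if_pos (Or.inl (by rw [hbv]))]
        have hside : ∀ x ∈ lZ, x ≠ a → x ≠ b → F x (v m) = 1 := by
          intro x hx hxa hxb
          have hx2 : (x : ℕ) % 2 = 0 := (hmemZ x).mp hx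
          have hxa' : (x : ℕ) ≠ (m : ℕ) - 1 := by
            intro h; exact hxa (by rw [Fin.ext_iff, hav]; omega)
          have hxb' : (x : ℕ) ≠ (m : ℕ) + 1 := by
            intro h; exact hxb (by rw [Fin.ext_iff, hbv]; omega)
          have h1 : ¬ m = x := by rw [Fin.ext_iff]; omega
          have h2 : ¬ ((x : ℕ) = (m : ℕ) + 1 ∨ (m : ℕ) = (x : ℕ) + 1) := by
            rintro (h | h) <;> omega
          rw [hFv x m, if_neg h1, if_neg h2]
        rw [lp_two_exc (fun j => F j (v m)) Zmat lZ hndZ a b hamem hbmem hab hfa hfb hside,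
          ZZ]
  -- value of P on path vertices
  have hPpath : ∀ m : Fin (k+1),
      P (v m) = if (m : ℕ) % 2 = 1 then Xmat
        else if (m : ℕ) = k then Zmat else 1 := by
    intro m
    have hmlt := m.isLt
    simp only [hP]
    rw [hZ0v m]
    by_cases hm : (m : ℕ) % 2 = 1
    · rw [if_pos hm, if_neg (by omega : ¬ (m : ℕ) = 0), one_mul]
      have hside : ∀ x ∈ lX, x ≠ m → F x (v m) = 1 := by
        intro x hx hxm
        have hx2 : (x : ℕ) % 2 = 1 := (hmemX x).mp hx
        have h1 : ¬ m = x := fun he => hxm he.symm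
        have h2 : ¬ ((x : ℕ) = (m : ℕ) + 1 ∨ (m : ℕ) = (x : ℕ) + 1) := by
          rintro (h | h) <;> omega
        rw [hFv x m, if_neg h1, if_neg h2]
      have hfa : F m (v m) = Xmat := by rw [hFv m m, if_pos rfl]
      rw [(lp_one_exc (fun j => F j (v m)) lX hndX m ((hmemX m).mpr hm) hside).trans hfa]
    · rw [if_neg hm]
      have hm0 : (m : ℕ) % 2 = 0 := by omega
      by_cases hmz : (m : ℕ) = 0
      · rw [if_pos hmz, if_neg (by omega : ¬ (m : ℕ) = k)]
        set a : Fin (k+1) := ⟨1, by omega⟩ with hadef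
        have hav : (a : ℕ) = 1 := rfl
        have hamem : a ∈ lX := (hmemX a).mpr (by rw [hav])
        have hfa : F a (v m) = Zmat := by
          have h1 : ¬ m = a := by rw [Fin.ext_iff, hav]; omega
          rw [hFv a m, if_neg h1, if_pos (Or.inl (by rw [hav]; omega))]
        have hside : ∀ x ∈ lX, x ≠ a → F x (v m) = 1 := by
          intro x hx hxa
          have hx2 : (x : ℕ) % 2 = 1 := (hmemX x).mp hx
          have hxa' : (x : ℕ) ≠ 1 := by
            intro h; exact hxa (by rw [Fin.ext_iff, hav]; omega)
          have h1 : ¬ m = x := by rw [Fin.ext_iff]; omega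
          have h2 : ¬ ((x : ℕ) = (m : ℕ) + 1 ∨ (m : ℕ) = (x : ℕ) + 1) := by
            rintro (h | h) <;> omega
          rw [hFv x m, if_neg h1, if_neg h2]
        rw [(lp_one_exc (fun j => F j (v m)) lX hndX a hamem hside).trans hfa, ZZ]
      · rw [if_neg hmz, one_mul]
        by_cases hmk : (m : ℕ) = k
        · rw [if_pos hmk]
          set a : Fin (k+1) := ⟨(m : ℕ) - 1, by omega⟩ with hadef
          have hav : (a : ℕ) = (m : ℕ) - 1 := rfl
          have hamem : a ∈ lX := (hmemX a).mpr (by rw [hav]; omega)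
          have hfa : F a (v m) = Zmat := by
            have h1 : ¬ m = a := by rw [Fin.ext_iff, hav]; omega
            rw [hFv a m, if_neg h1, if_pos (Or.inr (by rw [hav]; omega))]
          have hside : ∀ x ∈ lX, x ≠ a → F x (v m) = 1 := by
            intro x hx hxa
            have hx2 : (x : ℕ) % 2 = 1 := (hmemX x).mp hx
            have hxlt := x.isLt
            have hxa' : (x : ℕ) ≠ (m : ℕ) - 1 := by
              intro h; exact hxa (by rw [Fin.ext_iff, hav]; omega)
            have h1 : ¬ m = x := by rw [Fin.ext_iff]; omega
            have h2 : ¬ ((x : ℕ) = (m : ℕ) + 1 ∨ (m : ℕ) = (x : ℕ) + 1) := by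
              rintro (h | h) <;> omega
            rw [hFv x m, if_neg h1, if_neg h2]
          rw [(lp_one_exc (fun j => F j (v m)) lX hndX a hamem hside).trans hfa]
        · rw [if_neg hmk]
          set a : Fin (k+1) := ⟨(m : ℕ) - 1, by omega⟩ with hadef
          set b : Fin (k+1) := ⟨(m : ℕ) + 1, by omega⟩ with hbdef
          have hav : (a : ℕ) = (m : ℕ) - 1 := rfl
          have hbv : (b : ℕ) = (m : ℕ) + 1 := rfl
          have hamem : a ∈ lX := (hmemX a).mpr (by rw [hav]; omega)
          have hbmem : b ∈ lX := (hmemX b).mpr (by rw [hbv]; omega)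
          have hab : a ≠ b := by
            intro h; rw [Fin.ext_iff, hav, hbv] at h; omega
          have hfa : F a (v m) = Zmat := by
            have h1 : ¬ m = a := by rw [Fin.ext_iff, hav]; omega
            rw [hFv a m, if_neg h1, if_pos (Or.inr (by rw [hav]; omega))]
          have hfb : F b (v m) = Zmat := by
            have h1 : ¬ m = b := by rw [Fin.ext_iff, hbv]; omega
            rw [hFv b m, if_neg h1, if_pos (Or.inl (by rw [hbv]))]
          have hside : ∀ x ∈ lX, x ≠ a → x ≠ b → F x (v m) = 1 := by
            intro x hx hxa hxb
            have hx2 : (x : ℕ) % 2 = 1 := (hmemX x).mp hx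
            have hxa' : (x : ℕ) ≠ (m : ℕ) - 1 := by
              intro h; exact hxa (by rw [Fin.ext_iff, hav]; omega)
            have hxb' : (x : ℕ) ≠ (m : ℕ) + 1 := by
              intro h; exact hxb (by rw [Fin.ext_iff, hbv]; omega)
            have h1 : ¬ m = x := by rw [Fin.ext_iff]; omega
            have h2 : ¬ ((x : ℕ) = (m : ℕ) + 1 ∨ (m : ℕ) = (x : ℕ) + 1) := by
              rintro (h | h) <;> omega
            rw [hFv x m, if_neg h1, if_neg h2]
          rw [lp_two_exc (fun j => F j (v m)) Zmat lX hndX a b hamem hbmem hab hfa hfb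
            hside, ZZ]
  -- values away from the path
  have hFext : ∀ (i : V), (∀ j, v j ≠ i) → ∀ x : Fin (k+1),
      F x i = if G.Adj (v x) i then Zmat else 1 := by
    intro i hi x
    simp only [hF]
    rw [if_neg (fun he => hi x he.symm)]
  have hQext : ∀ i, (∀ j, v j ≠ i) → Q i = 1 ∨ Q i = Zmat := by
    intro i hi
    simp only [hQ]
    refine lp_one_or _ Zmat ZZ lZ ?_
    intro x hx
    rw [hFext i hi x]
    by_cases h : G.Adj (v x) i
    · exact Or.inr (if_pos h)
    · exact Or.inl (if_neg h)
  have hPext : ∀ i, (∀ j, v j ≠ i) → P i = 1 ∨ P i = Zmat := by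
    intro i hi
    simp only [hP]
    rw [show Z0 i = 1 by simp only [hZ0]; exact if_neg (fun he => hi 0 he.symm), one_mul]
    refine lp_one_or _ Zmat ZZ lX ?_
    intro x hx
    rw [hFext i hi x]
    by_cases h : G.Adj (v x) i
    · exact Or.inr (if_pos h)
    · exact Or.inl (if_neg h)
  have hQ0 : ∀ i, (∀ j, v j ≠ i) → (∀ j, ¬ G.Adj (v j) i) → Q i = 1 := by
    intro i hi hia
    simp only [hQ]
    refine lp_all_one _ lZ ?_
    intro x hx
    rw [hFext i hi x, if_neg (hia x)]
  have hP0 : ∀ i, (∀ j, v j ≠ i) → (∀ j, ¬ G.Adj (v j) i) → P i = 1 := by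
    intro i hi hia
    simp only [hP]
    rw [show Z0 i = 1 by simp only [hZ0]; exact if_neg (fun he => hi 0 he.symm), one_mul]
    refine lp_all_one _ lX ?_
    intro x hx
    rw [hFext i hi x, if_neg (hia x)]
  -- the operator identities
  have hXbar : pathXbar G v = pauliTensor 1 P := by
    show pauliTensor 1 Z0 *
      (((Finset.univ.filter fun j : Fin (k+1) => (j : ℕ) % 2 = 1).sort (· ≤ ·)).map
        (fun j => pauliTensor 1 (F j))).prod = pauliTensor 1 P
    rw [pt_list_prod, pt_mul, one_mul]
  have hZbar : pathZbar G v = pauliTensor 1 Q := by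
    show (((Finset.univ.filter fun j : Fin (k+1) => (j : ℕ) % 2 = 0).sort (· ≤ ·)).map
        (fun j => pauliTensor 1 (F j))).prod = pauliTensor 1 Q
    rw [pt_list_prod]
  have trich : ∀ i : V, (∃ m, v m = i) ∨ (∀ j, v j ≠ i) := by
    intro i
    by_cases h : ∃ m, v m = i
    · exact Or.inl h
    · push_neg at h; exact Or.inr h
  have hPauliX : IsPauliMat Xmat := Or.inr (Or.inl rfl)
  have hPauliZ : IsPauliMat Zmat := Or.inr (Or.inr (Or.inr rfl))
  have hPauli1 : IsPauliMat 1 := Or.inl rfl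
  have hlastv : ((Fin.last k : Fin (k+1)) : ℕ) = k := Fin.val_last k
  refine ⟨1, 1, P, Q, Or.inl rfl, Or.inl rfl, ?_, ?_, hXbar, hZbar, ?_, ?_, ?_⟩
  · -- P is Pauli
    intro i
    rcases trich i with ⟨m, rfl⟩ | hni
    · rw [hPpath m]
      split_ifs
      · exact hPauliX
      · exact hPauliZ
      · exact hPauli1
    · rcases hPext i hni with h | h <;> rw [h]
      · exact hPauli1
      · exact hPauliZ
  · -- Q is Pauli
    intro i
    rcases trich i with ⟨m, rfl⟩ | hni
    · rw [hQpath m]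
      split_ifs
      · exact hPauliX
      · exact hPauliZ
      · exact hPauli1
    · rcases hQext i hni with h | h <;> rw [h]
      · exact hPauli1
      · exact hPauliZ
  · -- anticommutation at O
    rw [hPpath (Fin.last k), hQpath (Fin.last k), hlastv]
    by_cases hkp : k % 2 = 0
    · rw [if_neg (by omega : ¬ k % 2 = 1), if_pos rfl, if_pos hkp, XZ, neg_neg]
    · rw [if_pos (by omega : k % 2 = 1), if_neg hkp, if_pos rfl]
      exact XZ
  · -- commutation away from O
    intro i hiO
    rcases trich i with ⟨m, rfl⟩ | hni
    · have hm : m ≠ Fin.last k := fun he => hiO (congrArg v he)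
      have hmk : (m : ℕ) < k := by
        have h1 := m.isLt
        have h2 : (m : ℕ) ≠ k := fun h => hm (by rw [Fin.ext_iff, hlastv]; exact h)
        omega
      rw [hPpath m, hQpath m]
      by_cases h2 : (m : ℕ) % 2 = 0
      · rw [if_neg (by omega : ¬ (m : ℕ) % 2 = 1), if_neg (by omega : ¬ (m : ℕ) = k),
          if_pos h2, one_mul, mul_one]
      · rw [if_pos (by omega : (m : ℕ) % 2 = 1), if_neg h2,
          if_neg (by omega : ¬ (m : ℕ) = k), one_mul, mul_one]
    · rcases hPext i hni with h1 | h1 <;> rcases hQext i hni with h2 | h2 <;>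
        rw [h1, h2] <;> simp
  · -- the measurement pattern
    intro i hiO
    refine ⟨?_, ?_, ?_⟩
    · rintro ⟨j, hjk, rfl⟩
      constructor
      · by_cases h2 : (j : ℕ) % 2 = 1
        · exact Or.inr (by rw [hPpath j, if_pos h2])
        · exact Or.inl (by rw [hPpath j, if_neg h2, if_neg (by omega : ¬ (j : ℕ) = k)])
      · by_cases h2 : (j : ℕ) % 2 = 0
        · exact Or.inr (by rw [hQpath j, if_pos h2])
        · exact Or.inl (by rw [hQpath j, if_neg h2, if_neg (by omega : ¬ (j : ℕ) = k)])
    · rintro ⟨-, hnv⟩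
      have hni : ∀ j, v j ≠ i := fun j he => hnv ⟨j, he⟩
      exact ⟨hPext i hni, hQext i hni⟩
    · rintro ⟨hnv, hna⟩
      have hni : ∀ j, v j ≠ i := fun j he => hnv ⟨j, he⟩
      have hnadj : ∀ j, ¬ G.Adj (v j) i := fun j ha => hna ⟨j, ha⟩
      exact ⟨hP0 i hni hnadj, hQ0 i hni hnadj⟩
end
end
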